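/- arXiv:1808.04111 — 3 statements merged into one kernel-verified Lean document; each statement's English description precedes it below -/
import Mathlib

section
/- There do not exist terms x, y, z : T such that add(x, x) →* z and s(mul(s(s(0)), y)) →* z. (In other words, the double of a ground term is never joinable with an odd number: the sentence (∃x)(∃y)(∃z) add(x,x) →* z ∧ s(mul(s(s(0)),y)) →* z is false.) -/
/-!
STATEMENT 11: There do not exist terms `x, y, z : T` such that `add(x, x) →* z` and
`s(mul(s(s(0)), y)) →* z`: the double of a ground term is never joinable with an odd
number, i.e., the sentence `(∃x)(∃y)(∃z) add(x,x) →* z ∧ s(mul(s(s(0)),y)) →* z` is false.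
-/

namespace Stmt11

/-- Ground terms over `0`, `s`, `add`, `mul`. -/
inductive T : Type
  | zero : T
  | s : T → T
  | add : T → T → T
  | mul : T → T → T

/-- The one-step rewrite relation `→` of the TRS for addition and multiplication in
Peano notation, closed under contexts. -/
inductive Step : T → T → Prop
  | addZ (x : T) : Step (T.add T.zero x) x
  | addS (x y : T) : Step (T.add (T.s x) y) (T.s (T.add x y))
  | mulZ (x : T) : Step (T.mul T.zero x) T.zero
  | mulS (x y : T) : Step (T.mul (T.s x) y) (T.add y (T.mul x y))
  | sCong {x y : T} : Step x y → Step (T.s x) (T.s y)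
  | addL {x y : T} (z : T) : Step x y → Step (T.add x z) (T.add y z)
  | addR {x y : T} (z : T) : Step x y → Step (T.add z x) (T.add z y)
  | mulL {x y : T} (z : T) : Step x y → Step (T.mul x z) (T.mul y z)
  | mulR {x y : T} (z : T) : Step x y → Step (T.mul z x) (T.mul z y)

/-- `→*`: the reflexive-transitive closure of `→`. -/
def Steps : T → T → Prop := Relation.ReflTransGen Step

/- Each rule is an equation of Peano arithmetic, so rewriting preserves the value of a term
in `ℕ`; a common reduct of `add(x, x)` and `s(mul(s(s(0)), y))` would have a value that is
both even and odd. -/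

def eval : T → ℕ
  | T.zero => 0
  | T.s t => eval t + 1
  | T.add a b => eval a + eval b
  | T.mul a b => eval a * eval b

theorem Step.eval_eq {a b : T} (h : Step a b) : eval a = eval b := by
  induction h <;> simp only [eval, *] <;> ring

theorem Steps.eval_eq {a b : T} (h : Steps a b) : eval a = eval b := by
  induction h with
  | refl => rfl
  | tail _ hstep ih => exact ih.trans hstep.eval_eq

theorem double_never_joinable_with_odd :
    ¬ ∃ x y z : T,
        Steps (T.add x x) z ∧ Steps (T.s (T.mul (T.s (T.s T.zero)) y)) z := by
  rintro ⟨x, y, z, hx, hy⟩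
  have hxz := hx.eval_eq
  have hyz := hy.eval_eq
  simp only [eval] at hxz hyz
  omega

end Stmt11
end

section
/- For all terms x, y : T there exists a term z : T such that add(x, y) →* z and add(y, x) →* z (ground commutativity of add expressed as joinability). -/
/-!
STATEMENT 12: For all terms `x, y : T` there exists a term `z : T` such that
`add(x, y) →* z` and `add(y, x) →* z` (ground commutativity of `add` expressed as
joinability).
-/

namespace Stmt12

/-- Ground terms over `0`, `s`, `add`, `mul`. -/
inductive T : Type
  | zero : T
  | s : T → T
  | add : T → T → T
  | mul : T → T → T

/-- The one-step rewrite relation `→` of the TRS for addition and multiplication in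
Peano notation, closed under contexts. -/
inductive Step : T → T → Prop
  | addZ (x : T) : Step (T.add T.zero x) x
  | addS (x y : T) : Step (T.add (T.s x) y) (T.s (T.add x y))
  | mulZ (x : T) : Step (T.mul T.zero x) T.zero
  | mulS (x y : T) : Step (T.mul (T.s x) y) (T.add y (T.mul x y))
  | sCong {x y : T} : Step x y → Step (T.s x) (T.s y)
  | addL {x y : T} (z : T) : Step x y → Step (T.add x z) (T.add y z)
  | addR {x y : T} (z : T) : Step x y → Step (T.add z x) (T.add z y)
  | mulL {x y : T} (z : T) : Step x y → Step (T.mul x z) (T.mul y z)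
  | mulR {x y : T} (z : T) : Step x y → Step (T.mul z x) (T.mul z y)

/-- `→*`: the reflexive-transitive closure of `→`. -/
def Steps : T → T → Prop := Relation.ReflTransGen Step

/-!
Every ground term rewrites to the numeral of its value in `ℕ`, since `add` and `mul` applied
to numerals compute the sum and product. As `add x y` and `add y x` have the same value, that
numeral joins them.
-/

def num : ℕ → T
  | 0 => T.zero
  | n + 1 => T.s (num n)

def eval : T → ℕ
  | T.zero => 0
  | T.s t => eval t + 1
  | T.add a b => eval a + eval b
  | T.mul a b => eval a * eval b

namespace Steps

theorem congr_s {x y : T} (h : Steps x y) : Steps (T.s x) (T.s y) :=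
  Relation.ReflTransGen.lift T.s (fun _ _ => Step.sCong) _ _ h

theorem congr_add_left {x y : T} (z : T) (h : Steps x y) : Steps (T.add x z) (T.add y z) :=
  Relation.ReflTransGen.lift (T.add · z) (fun _ _ => Step.addL z) _ _ h

theorem congr_add_right {x y : T} (z : T) (h : Steps x y) : Steps (T.add z x) (T.add z y) :=
  Relation.ReflTransGen.lift (T.add z) (fun _ _ => Step.addR z) _ _ h

theorem congr_mul_left {x y : T} (z : T) (h : Steps x y) : Steps (T.mul x z) (T.mul y z) :=
  Relation.ReflTransGen.lift (T.mul · z) (fun _ _ => Step.mulL z) _ _ h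

theorem congr_mul_right {x y : T} (z : T) (h : Steps x y) : Steps (T.mul z x) (T.mul z y) :=
  Relation.ReflTransGen.lift (T.mul z) (fun _ _ => Step.mulR z) _ _ h

end Steps

theorem steps_add_num (m n : ℕ) : Steps (T.add (num m) (num n)) (num (m + n)) := by
  induction m with
  | zero => rw [Nat.zero_add]; exact Relation.ReflTransGen.single (Step.addZ _)
  | succ m ih =>
    rw [Nat.succ_add]
    exact Relation.ReflTransGen.head (Step.addS _ _) ih.congr_s

theorem steps_mul_num (m n : ℕ) : Steps (T.mul (num m) (num n)) (num (m * n)) := by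
  induction m with
  | zero => rw [Nat.zero_mul]; exact Relation.ReflTransGen.single (Step.mulZ _)
  | succ m ih =>
    rw [Nat.succ_mul, Nat.add_comm (m * n)]
    exact Relation.ReflTransGen.head (Step.mulS _ _)
      ((ih.congr_add_right _).trans (steps_add_num n (m * n)))

theorem steps_num_eval (t : T) : Steps t (num (eval t)) := by
  induction t with
  | zero => exact Relation.ReflTransGen.refl
  | s t ih => exact ih.congr_s
  | add a b iha ihb =>
    exact ((iha.congr_add_left _).trans (ihb.congr_add_right _)).trans (steps_add_num _ _)
  | mul a b iha ihb =>
    exact ((iha.congr_mul_left _).trans (ihb.congr_mul_right _)).trans (steps_mul_num _ _)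

theorem add_ground_commutative :
    ∀ x y : T, ∃ z : T, Steps (T.add x y) z ∧ Steps (T.add y x) z := by
  intro x y
  have hyx := steps_num_eval (T.add y x)
  rw [eval, Nat.add_comm] at hyx
  exact ⟨num (eval (T.add x y)), steps_num_eval _, hyx⟩

end Stmt12
end

section
/- The TRS with rules non → f(g, f(non, g)), g → a, f(a, x) → a, f(b, b) → b, f(b, a) → b is top-terminating: there is no infinite sequence of terms t : ℕ → T such that for every n ∈ ℕ there exists u : T with t(n) →* u and u →_ε t(n+1). (Equivalently, no term admits a reduction sequence containing infinitely many root rewriting steps.) -/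
/-!
STATEMENT 15: The TRS with rules `non → f(g, f(non, g))`, `g → a`, `f(a, x) → a`,
`f(b, b) → b`, `f(b, a) → b` is top-terminating: there is no infinite sequence of terms
`t : ℕ → T` such that for every `n ∈ ℕ` there exists `u : T` with `t(n) →* u` and
`u →_ε t(n+1)` (no term admits a reduction sequence containing infinitely many root
rewriting steps).
-/

namespace Stmt15

/-- Ground terms over the constants `a`, `b`, `g`, `non` and the binary symbol `f`. -/
inductive T : Type
  | a : T
  | b : T
  | g : T
  | non : T
  | f : T → T → T

/-- The root-step relation `→_ε` : exactly the rule instances, applied at the root. -/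
inductive RootStep : T → T → Prop
  | non : RootStep T.non (T.f T.g (T.f T.non T.g))
  | g : RootStep T.g T.a
  | fa (x : T) : RootStep (T.f T.a x) T.a
  | fbb : RootStep (T.f T.b T.b) T.b
  | fba : RootStep (T.f T.b T.a) T.b

/-- The one-step rewrite relation `→` : the closure of `→_ε` under contexts. -/
inductive Step : T → T → Prop
  | root {x y : T} : RootStep x y → Step x y
  | left {x y : T} (z : T) : Step x y → Step (T.f x z) (T.f y z)
  | right {x y : T} (z : T) : Step x y → Step (T.f z x) (T.f z y)

/-- `→*`: the reflexive-transitive closure of `→`. -/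
def Steps : T → T → Prop := Relation.ReflTransGen Step

/-! Weigh a term by the leaves of its left spine, with `non ↦ 3`, `g ↦ 1` and `a, b ↦ 0`,
plus one per `f` on the spine. Rewriting inside a right argument does not touch this weight, and
every rule strictly decreases it, so it is non-increasing along `→*` and strictly decreasing along
`→_ε`; a top-infinite sequence would thus give an infinite descending chain in `ℕ`. -/

theorem not_exists_seq_steps_rootStep_of_measure {α β : Type*} [Preorder β] [WellFoundedLT β]
    {steps root : α → α → Prop} (μ : α → β) (h_steps : ∀ {x y}, steps x y → μ y ≤ μ x)
    (h_root : ∀ {x y}, root x y → μ y < μ x) :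
    ¬ ∃ t : ℕ → α, ∀ n, ∃ u, steps (t n) u ∧ root u (t (n + 1)) := by
  rintro ⟨t, ht⟩
  obtain ⟨n, hn⟩ := WellFounded.not_rel_apply_succ (r := (· < ·)) (μ ∘ t)
  obtain ⟨u, h_tu, h_ut⟩ := ht n
  exact hn ((h_root h_ut).trans_le (h_steps h_tu))

def leftSpineWeight : T → ℕ
  | T.a => 0
  | T.b => 0
  | T.g => 1
  | T.non => 3
  | T.f x _ => leftSpineWeight x + 1

theorem RootStep.leftSpineWeight_lt {x y : T} (h : RootStep x y) :
    leftSpineWeight y < leftSpineWeight x := by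
  cases h <;> simp [leftSpineWeight]

theorem Step.leftSpineWeight_le {x y : T} (h : Step x y) :
    leftSpineWeight y ≤ leftSpineWeight x := by
  induction h with
  | root h => exact h.leftSpineWeight_lt.le
  | left _ _ ih => simpa only [leftSpineWeight, add_le_add_iff_right] using ih
  | right _ _ => exact le_rfl

theorem Steps.leftSpineWeight_le {x y : T} (h : Steps x y) :
    leftSpineWeight y ≤ leftSpineWeight x := by
  induction h with
  | refl => exact le_rfl
  | tail _ h ih => exact h.leftSpineWeight_le.trans ih

theorem top_terminating :
    ¬ ∃ t : ℕ → T, ∀ n : ℕ, ∃ u : T, Steps (t n) u ∧ RootStep u (t (n + 1)) :=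
  not_exists_seq_steps_rootStep_of_measure leftSpineWeight Steps.leftSpineWeight_le
    RootStep.leftSpineWeight_lt

end Stmt15
end
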